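/- arXiv:2208.01223 — 2 statements merged into one kernel-verified Lean document; each statement's English description precedes it below -/
import Mathlib

section
/- Let p be a collision-free path for an agent that ends with the agent waiting forever at a fixed vertex e (its old dummy endpoint), and suppose all other agents' paths also end stationary at vertices distinct from e and from each other. If, in addition, there exists a path in G from e through a finite sequence of goal vertices to a new endpoint e' that avoids all the other agents' final stationary vertices, then there exists a path for the agent that is collision-free with the other agents' paths, visits all its goal vertices in order, and ends stationary at e'. -/
def ValidPath {V : Type*} (G : SimpleGraph V) (p : ℕ → V) : Prop :=
  ∀ t, p (t+1) = p t ∨ G.Adj (p t) (p (t+1))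

def EndsStationary {V : Type*} (p : ℕ → V) (v : V) (T : ℕ) : Prop :=
  ∀ t ≥ T, p t = v

def NoCollision {V : Type*} (p q : ℕ → V) : Prop :=
  ∀ t, p t ≠ q t ∧ ¬ (p t = q (t+1) ∧ p (t+1) = q t)

def VisitsInOrder {V : Type*} (p : ℕ → V) (gs : List V) : Prop :=
  ∃ f : Fin gs.length → ℕ, Monotone f ∧ ∀ i, p (f i) = gs.get i

theorem stmt6 {V : Type*} (G : SimpleGraph V) (N : ℕ) (q : Fin N → ℕ → V)
    (e e' : V) (gs : List V) (p : ℕ → V) (T : ℕ)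
    (hp : ValidPath G p) (hq : ∀ j, ValidPath G (q j))
    (hpstat : EndsStationary p e T)
    (hqstat : ∀ j, EndsStationary (q j) (q j T) T)
    (hdist : ∀ j j', j ≠ j' → q j T ≠ q j' T)
    (hne : ∀ j, q j T ≠ e)
    (hpfree : ∀ j, NoCollision p (q j))
    (r : ℕ → V) (L : ℕ) (hr : ValidPath G r) (hr0 : r 0 = e)
    (hrvisits : VisitsInOrder r gs) (hrend : EndsStationary r e' L)
    (hravoid : ∀ t j, r t ≠ q j T) :
    ∃ p' : ℕ → V, p' 0 = p 0 ∧ ValidPath G p' ∧ (∀ j, NoCollision p' (q j)) ∧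
      VisitsInOrder p' gs ∧ ∃ T', EndsStationary p' e' T' := by
  classical
  set p' : ℕ → V := fun t => if t < T then p t else r (t - T) with hp'def
  have hagree : ∀ t ≤ T, p' t = p t := by
    intro t ht
    by_cases h : t < T
    · simp [hp'def, h]
    · have hT : t = T := le_antisymm ht (not_lt.mp h)
      subst hT
      simp [hp'def, hr0, hpstat t le_rfl]
  have hafter : ∀ t, T ≤ t → p' t = r (t - T) := by
    intro t ht; simp [hp'def, not_lt.mpr ht]
  refine ⟨p', hagree 0 (Nat.zero_le T), ?_, ?_, ?_, ?_⟩
  · intro t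
    rcases lt_or_ge (t+1) T with h | h
    · rw [hagree t (Nat.lt_of_succ_lt h).le, hagree (t+1) h.le]
      exact hp t
    · rcases lt_or_ge t T with h2 | h2
      · rw [hagree t h2.le, hagree (t+1) (by omega)]
        exact hp t
      · rw [hafter t h2, hafter (t+1) (le_trans h2 (Nat.le_succ t)),
          show t + 1 - T = (t - T) + 1 by omega]
        exact hr (t - T)
  · intro j t
    rcases lt_or_ge (t+1) T with h | h
    · rw [hagree t (Nat.lt_of_succ_lt h).le, hagree (t+1) h.le]
      exact hpfree j t
    · rcases lt_or_ge t T with h2 | h2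
      · rw [hagree t h2.le, hagree (t+1) (by omega)]
        exact hpfree j t
      · have hq1 : q j t = q j T := hqstat j t h2
        have hq2 : q j (t+1) = q j T := hqstat j (t+1) (le_trans h2 (Nat.le_succ t))
        rw [hafter t h2, hq1, hq2]
        exact ⟨hravoid (t - T) j, fun h3 => hravoid (t - T) j h3.1⟩
  · obtain ⟨f, hmono, hf⟩ := hrvisits
    refine ⟨fun i => f i + T, fun i i' hii => Nat.add_le_add_right (hmono hii) T, fun i => ?_⟩
    rw [hafter (f i + T) (Nat.le_add_left T (f i)), Nat.add_sub_cancel]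
    exact hf i
  · refine ⟨T + L, fun t ht => ?_⟩
    rw [hafter t (by omega)]
    exact hrend (t - T) (by omega)
end

section
/- In a well-formed MG-MAPD instance, for any agent and any finite sequence of goal vertices g₁,...,gₖ that are endpoints, each distinct from a given finite set S of 'blocked' endpoints, and any two endpoints e, e' ∉ S with e ≠ e', there exists a walk in G from e through g₁,...,gₖ in order to e' that never visits any vertex of S. -/
theorem stmt7 {V : Type*} (G : SimpleGraph V) (EP : Set V)
    (hwf : ∀ u v, u ∈ EP → v ∈ EP →
      ∃ w : G.Walk u v, ∀ x ∈ w.support, x ∈ EP → x = u ∨ x = v)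
    (S : Finset V) (hS : ↑S ⊆ EP)
    (e e' : V) (he : e ∈ EP) (he' : e' ∈ EP) (hee' : e ≠ e')
    (heS : e ∉ S) (he'S : e' ∉ S)
    (gs : List V) (hgs : ∀ x ∈ gs, x ∈ EP ∧ x ∉ S) :
    ∃ w : G.Walk e e', (∀ x ∈ w.support, x ∉ S) ∧ gs.Sublist w.support := by
  classical
  -- avoidance: any hwf-walk between S-free endpoints avoids S
  have avoid : ∀ u v, u ∈ EP → v ∈ EP → u ∉ S → v ∉ S →
      ∃ w : G.Walk u v, ∀ x ∈ w.support, x ∉ S := by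
    intro u v hu hv huS hvS
    obtain ⟨w, hw⟩ := hwf u v hu hv
    refine ⟨w, fun x hx hxS => ?_⟩
    rcases hw x hx (hS hxS) with rfl | rfl
    · exact huS hxS
    · exact hvS hxS
  -- prefix walk from a to g whose support is a :: (l ++ [g])
  have prefixWalk : ∀ a g, a ∈ EP → a ∉ S → g ∈ EP → g ∉ S →
      ∃ w : G.Walk a g, (∀ x ∈ w.support, x ∉ S) ∧
        ∃ l : List V, w.support = a :: (l ++ [g]) := by
    intro a g ha haS hg hgS
    by_cases hag : a = g
    · -- detour through some t ≠ a
      subst hag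
      obtain ⟨t, ht, htS, hta⟩ : ∃ t, t ∈ EP ∧ t ∉ S ∧ t ≠ a := by
        by_cases hae : a = e
        · exact ⟨e', he', he'S, fun h => hee' (h.trans hae).symm⟩
        · exact ⟨e, he, heS, fun h => hae h.symm⟩
      obtain ⟨u, hu⟩ := avoid a t ha ht haS htS
      refine ⟨u.append u.reverse, ?_, ?_⟩
      · intro x hx
        rw [SimpleGraph.Walk.support_append] at hx
        rcases List.mem_append.mp hx with h | h
        · exact hu x h
        · exact hu x (by
            have := List.mem_of_mem_tail h
            rwa [SimpleGraph.Walk.support_reverse, List.mem_reverse] at this)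
      · have hsupp := u.support_eq_cons
        have hne : u.support.tail ≠ [] := by
          intro h0
          have h1 : u.support = [a] := by rw [hsupp, h0]
          have h2 := u.getLast_support
          simp [h1] at h2
          exact hta h2.symm
        refine ⟨u.support.tail ++ u.reverse.support.tail.dropLast, ?_⟩
        rw [SimpleGraph.Walk.support_append]
        have hlen2 : 2 ≤ u.support.length := by
          rw [hsupp]
          cases h' : u.support.tail with
          | nil => exact absurd h' hne
          | cons b l => simp
        have hrev : u.reverse.support.tail ≠ [] := by
          rw [SimpleGraph.Walk.support_reverse]
          intro h0
          have := congrArg List.length h0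
          simp only [List.length_tail, List.length_reverse, List.length_nil] at this
          omega
        have hlast : u.reverse.support.tail.getLast hrev = a := by
          rw [List.getLast_tail]
          exact u.reverse.getLast_support
        conv_lhs => rw [hsupp, ← List.dropLast_append_getLast hrev, hlast]
        simp
        rw [← List.cons_append, ← hsupp]
    · obtain ⟨w, hw⟩ := avoid a g ha hg haS hgS
      refine ⟨w, hw, ?_⟩
      have hsupp := w.support_eq_cons
      have hne : w.support.tail ≠ [] := by
        intro h0
        have h1 : w.support = [a] := by rw [hsupp, h0]
        have h2 := w.getLast_support
        simp [h1] at h2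
        exact hag h2
      have hlast : w.support.tail.getLast hne = g := by
        rw [List.getLast_tail]
        exact w.getLast_support
      refine ⟨w.support.tail.dropLast, ?_⟩
      conv_lhs => rw [hsupp, ← List.dropLast_append_getLast hne, hlast]
  -- main induction
  suffices h : ∀ gs : List V, (∀ x ∈ gs, x ∈ EP ∧ x ∉ S) →
      ∀ a, a ∈ EP → a ∉ S →
      ∃ w : G.Walk a e', (∀ x ∈ w.support, x ∉ S) ∧ (a :: gs).Sublist w.support by
    obtain ⟨w, hw1, hw2⟩ := h gs hgs e he heS
    exact ⟨w, hw1, ((List.sublist_cons_self e gs).trans hw2)⟩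
  intro gs
  induction gs with
  | nil =>
    intro _ a ha haS
    obtain ⟨w, hw⟩ := avoid a e' ha he' haS he'S
    refine ⟨w, hw, ?_⟩
    rw [w.support_eq_cons]
    simp
  | cons g rest ih =>
    intro hgs a ha haS
    obtain ⟨hg, hgS⟩ := hgs g List.mem_cons_self
    obtain ⟨w₂, hw₂, hsub₂⟩ := ih (fun x hx => hgs x (List.mem_cons_of_mem _ hx)) g hg hgS
    obtain ⟨w₁, hw₁, l, hl⟩ := prefixWalk a g ha haS hg hgS
    refine ⟨w₁.append w₂, ?_, ?_⟩
    · intro x hx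
      rw [SimpleGraph.Walk.support_append] at hx
      rcases List.mem_append.mp hx with h | h
      · exact hw₁ x h
      · exact hw₂ x (List.mem_of_mem_tail h)
    · rw [SimpleGraph.Walk.support_append, hl]
      have hrest : rest.Sublist w₂.support.tail := by
        have := hsub₂
        rw [w₂.support_eq_cons] at this
        exact List.cons_sublist_cons.mp this
      have : (g :: rest).Sublist ((l ++ [g]) ++ w₂.support.tail) := by
        have h1 : [g].Sublist (l ++ [g]) := List.sublist_append_right l [g] -- [g] <+ l ++ [g]
        have := h1.append hrest
        simpa using this
      calc (a :: g :: rest).Sublist (a :: ((l ++ [g]) ++ w₂.support.tail)) :=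
            List.cons_sublist_cons.mpr this
        _ = (a :: (l ++ [g])) ++ w₂.support.tail := by simp
end
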